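/- (Identification with multiple time periods, Section 3.2.) Let T ≥ 1 and let (Y_t)_{t = −(T−1), …, T} be integrable post- and pre-period outcomes, with matched-pair differences ΔY_{t,(T)} := Y_t − Y_{t−T} for t = 1, …, T. For each t = 1, …, T suppose there are integrable potential outcomes Y_t^{(1,0)}, Y_t^{(1,1)}, Y_t^{(0,1)}, Y_t^{(0,0)} and Y_{t−T}^{(0,0)} with consistency (Y_t = Y_t^{(1,0)} a.s. on {G=T}, Y_t = Y_t^{(0,1)} a.s. on {G=N}, Y_t = Y_t^{(0,0)} a.s. on {G=C}, Y_{t−T} = Y_{t−T}^{(0,0)} a.s.), satisfying for each t the multi-period conditional counterfactual parallel trends assumption (S7): E[Y_t^{(0,0)} − Y_{t−T}^{(0,0)} ∣ G=T, X] = E[Y_t^{(0,0)} − Y_{t−T}^{(0,0)} ∣ G=C, X] and E[Y_t^{(0,0)} − Y_{t−T}^{(0,0)} ∣ G=N, X] = E[Y_t^{(0,0)} − Y_{t−T}^{(0,0)} ∣ G=C, X] P-a.s., together with the t-specific counterfactual offsetting assumption E[Y_t^{(1,0)} − Y_t^{(1,1)} ∣ G=T, X] + E[Y_t^{(0,1)}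 − Y_t^{(0,0)} ∣ G=N, X] = 0 P-a.s. Then, for each t, E[ (1{G=T}/p_T)·(ΔY_{t,(T)} − Δμ_C^{t}(X)) ] + E[ (e_T(X)/p_T)·( 1{G=N}/e_N(X) − 1{G=C}/e_C(X) )·ΔY_{t,(T)} ] = τ_t := E[(Y_t^{(1,1)} − Y_t^{(0,0)})·1{G=T}]/p_T, where Δμ_C^{t} is a version of E[ΔY_{t,(T)} ∣ G=C, X]; consequently the time-averaged functional (1/T)·Σ_{t=1}^{T} of the left-hand sides equals the time-averaged AOTT (1/T)·Σ_{t=1}^{T} τ_t. -/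

import Mathlib

open MeasureTheory ProbabilityTheory Filter Topology

/-- Group label: `T` = treated (`g(A)=(1,0)`), `N` = neighboring control (`g(A)=(0,1)`),
`C` = non-neighboring control (`g(A)=(0,0)`). -/
inductive GLabel : Type
  | T | N | C
  deriving DecidableEq

instance : MeasurableSpace GLabel := ⊤

/-- The σ-algebra `𝔛` generated by the covariates `X`. -/
def sigmaX {Ω : Type} {q : ℕ} (X : Ω → (Fin q → ℝ)) : MeasurableSpace Ω :=
  MeasurableSpace.comap X inferInstance

/-- The indicator `1{G = g}` as a real-valued function. -/
def indG {Ω : Type} (G : Ω → GLabel) (g : GLabel) (ω : Ω) : ℝ :=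
  if G ω = g then 1 else 0

/-- `f` is a version of the conditional expectation `E[Z ∣ G = g, X]`:
it is measurable and `E[Z·1{G=g} ∣ 𝔛] = f(X)·e_g(X)` `P`-a.s. -/
def IsCondVersion {Ω : Type} [MeasurableSpace Ω] (P : Measure Ω) {q : ℕ}
    (X : Ω → (Fin q → ℝ)) (G : Ω → GLabel) (e : GLabel → (Fin q → ℝ) → ℝ)
    (g : GLabel) (Z : Ω → ℝ) (f : (Fin q → ℝ) → ℝ) : Prop :=
  Measurable f ∧
    P[(fun ω => Z ω * indG G g ω) | sigmaX X] =ᵐ[P] (fun ω => f (X ω) * e g (X ω))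

/-! Conditioning on `X` turns each group-`g` term into an integral of a conditional version
against `e_g(X)`, and the weight `e_T / e_g` turns that into an integral against `e_T(X)`, i.e. a
mean over the covariate distribution of the treated. By consistency, `ΔY` splits on the treated
into `(Y^{(1,0)} - Y^{(1,1)}) + (Y^{(1,1)} - Y^{(0,0)}) + ΔY^{(0,0)}` and on the neighbouring
controls into `(Y^{(0,1)} - Y^{(0,0)}) + ΔY^{(0,0)}`. After reweighting, offsetting cancels the two
spillover terms and parallel trends cancels both trend terms against the two copies of `Δμ_C`,
leaving the effect on the treated. -/

theorem integral_mul_eq_of_condExp_ae_eq {Ω : Type*} {m m₀ : MeasurableSpace Ω} {P : Measure Ω}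
    (hm : m ≤ m₀) [SigmaFinite (P.trim hm)] {h W v : Ω → ℝ} (hh : StronglyMeasurable[m] h)
    (hW : Integrable W P) (hhW : Integrable (fun ω => h ω * W ω) P) (hv : P[W | m] =ᵐ[P] v) :
    ∫ ω, h ω * W ω ∂P = ∫ ω, h ω * v ω ∂P := by
  rw [← integral_condExp hm]
  refine integral_congr_ae ?_
  filter_upwards [condExp_mul_of_stronglyMeasurable_left hh hhW hW, hv] with ω hhW' hv'
  change P[h * W | m] ω = _
  rw [hhW', Pi.mul_apply, hv']

lemma abs_div_le_inv_of_le {a b ε : ℝ} (hε : 0 < ε) (ha₀ : 0 ≤ a) (ha₁ : a ≤ 1) (hb : ε ≤ b) :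
    |a / b| ≤ ε⁻¹ := by
  rw [abs_of_nonneg (div_nonneg ha₀ (hε.le.trans hb)), ← one_div]
  exact div_le_div₀ zero_le_one ha₁ hε hb

lemma mul_indG_eq_indicator {Ω : Type} (G : Ω → GLabel) (Z : Ω → ℝ) (g : GLabel) :
    (fun ω => Z ω * indG G g ω) = {ω | G ω = g}.indicator Z := by
  ext ω
  by_cases hω : G ω = g <;> simp [indG, hω]

section Propensity

variable {Ω : Type} [MeasurableSpace Ω] {P : Measure Ω} {q : ℕ} {X : Ω → (Fin q → ℝ)}
  {G : Ω → GLabel} {e : GLabel → (Fin q → ℝ) → ℝ} {g : GLabel} {Z : Ω → ℝ} {f : (Fin q → ℝ) → ℝ}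
  {ε : ℝ}

lemma MeasureTheory.Integrable.mul_indG (hG : Measurable G) (hZ : Integrable Z P) (g : GLabel) :
    Integrable (fun ω => Z ω * indG G g ω) P := by
  rw [mul_indG_eq_indicator]
  exact hZ.indicator (hG (MeasurableSpace.measurableSet_top (s := {g})))

lemma integrable_indG (hG : Measurable G) [IsFiniteMeasure P] (g : GLabel) :
    Integrable (indG G g) P := by
  simpa using (integrable_const (1 : ℝ)).mul_indG hG g

lemma integral_comp_mul_of_condExp_ae_eq [IsFiniteMeasure P] (hX : Measurable X)
    {h : (Fin q → ℝ) → ℝ} (hh : Measurable h) {W v : Ω → ℝ} (hW : Integrable W P)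
    (hhW : Integrable (fun ω => h (X ω) * W ω) P) (hv : P[W | sigmaX X] =ᵐ[P] v) :
    ∫ ω, h (X ω) * W ω ∂P = ∫ ω, h (X ω) * v ω ∂P :=
  integral_mul_eq_of_condExp_ae_eq hX.comap_le
    (hh.comp (comap_measurable X)).stronglyMeasurable hW hhW hv

lemma IsCondVersion.integral_mul_indG [IsFiniteMeasure P] (hX : Measurable X)
    (hv : IsCondVersion P X G e g Z f) :
    ∫ ω, Z ω * indG G g ω ∂P = ∫ ω, f (X ω) * e g (X ω) ∂P := by
  rw [← integral_condExp hX.comap_le]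
  exact integral_congr_ae hv.2

lemma IsCondVersion.congr {Z' : Ω → ℝ} (hv : IsCondVersion P X G e g Z f)
    (hZ : ∀ᵐ ω ∂P, G ω = g → Z ω = Z' ω) : IsCondVersion P X G e g Z' f := by
  refine ⟨hv.1, (condExp_congr_ae ?_).trans hv.2⟩
  filter_upwards [hZ] with ω hω
  by_cases hg : G ω = g <;> simp [indG, hg, hω]

lemma IsCondVersion.add {Z₁ Z₂ : Ω → ℝ} {f₁ f₂ : (Fin q → ℝ) → ℝ}
    (h₁ : IsCondVersion P X G e g Z₁ f₁) (h₂ : IsCondVersion P X G e g Z₂ f₂)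
    (hG : Measurable G) (hZ₁ : Integrable Z₁ P) (hZ₂ : Integrable Z₂ P) :
    IsCondVersion P X G e g (fun ω => Z₁ ω + Z₂ ω) (fun x => f₁ x + f₂ x) := by
  refine ⟨h₁.1.add h₂.1, ?_⟩
  have hsplit : (fun ω => (Z₁ ω + Z₂ ω) * indG G g ω) =
      (fun ω => Z₁ ω * indG G g ω) + fun ω => Z₂ ω * indG G g ω := by
    ext ω; simp only [Pi.add_apply, add_mul]
  rw [hsplit]
  filter_upwards [condExp_add (hZ₁.mul_indG hG g) (hZ₂.mul_indG hG g) (sigmaX X), h₁.2, h₂.2]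
    with ω hadd hv₁ hv₂
  rw [hadd, Pi.add_apply, hv₁, hv₂, add_mul]

lemma IsCondVersion.ae_eq_comp (he : ∀ x, e g x ≠ 0) {f' : (Fin q → ℝ) → ℝ}
    (hv : IsCondVersion P X G e g Z f) (hv' : IsCondVersion P X G e g Z f') :
    ∀ᵐ ω ∂P, f (X ω) = f' (X ω) := by
  filter_upwards [hv.2.symm.trans hv'.2] with ω hω
  exact mul_right_cancel₀ (he (X ω)) hω

lemma IsCondVersion.integrable_comp (hX : Measurable X) (he : Measurable (e g))
    (hε : 0 < ε) (hpos : ∀ x, ε ≤ e g x) (hv : IsCondVersion P X G e g Z f) :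
    Integrable (fun ω => f (X ω)) P := by
  have hfe : Integrable (fun ω => f (X ω) * e g (X ω)) P := integrable_condExp.congr hv.2
  have hinv : ∀ x, ‖(e g x)⁻¹‖ ≤ ε⁻¹ := fun x => by
    rw [Real.norm_eq_abs, abs_of_pos (inv_pos.2 (hε.trans_le (hpos x)))]
    exact inv_anti₀ hε (hpos x)
  refine (hfe.mul_bdd (he.comp hX).inv.aestronglyMeasurable
    (ae_of_all _ fun ω => hinv (X ω))).congr (ae_of_all _ fun ω => ?_)
  simp [mul_assoc, mul_inv_cancel₀ (hε.trans_le (hpos (X ω))).ne']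

lemma integrable_propensity_ratio_mul (hX : Measurable X) (he : ∀ g, Measurable (e g))
    (hε : 0 < ε) (hpos : ∀ g x, ε ≤ e g x) (he1 : ∀ g x, e g x ≤ 1) (g' g : GLabel)
    {W : Ω → ℝ} (hW : Integrable W P) :
    Integrable (fun ω => e g' (X ω) / e g (X ω) * W ω) P :=
  hW.bdd_mul (((he g').comp hX).div ((he g).comp hX)).aestronglyMeasurable
    (ae_of_all _ fun _ => (Real.norm_eq_abs _).trans_le <|
      abs_div_le_inv_of_le hε (hε.trans_le (hpos g' _)).le (he1 g' _) (hpos g _))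

lemma IsCondVersion.integral_propensity_ratio_mul [IsFiniteMeasure P] (hX : Measurable X)
    (hG : Measurable G) (he : ∀ g, Measurable (e g)) (hε : 0 < ε) (hpos : ∀ g x, ε ≤ e g x)
    (he1 : ∀ g x, e g x ≤ 1) (g' : GLabel) (hZ : Integrable Z P)
    (hv : IsCondVersion P X G e g Z f) :
    ∫ ω, e g' (X ω) / e g (X ω) * (Z ω * indG G g ω) ∂P = ∫ ω, f (X ω) * e g' (X ω) ∂P := by
  rw [integral_comp_mul_of_condExp_ae_eq (h := fun x => e g' x / e g x) hX ((he g').div (he g))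
    (hZ.mul_indG hG g)
    (integrable_propensity_ratio_mul hX he hε hpos he1 g' g (hZ.mul_indG hG g)) hv.2]
  refine integral_congr_ae (ae_of_all _ fun ω => ?_)
  have hne : e g (X ω) ≠ 0 := (hε.trans_le (hpos g (X ω))).ne'
  field_simp

end Propensity

section Identification

variable {Ω : Type} [MeasurableSpace Ω] {P : Measure Ω} [IsFiniteMeasure P] {q : ℕ}
  {X : Ω → (Fin q → ℝ)} {G : Ω → GLabel} {e : GLabel → (Fin q → ℝ) → ℝ} {ε : ℝ}

theorem did_estimand_eq_of_balance (hX : Measurable X) (hG : Measurable G)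
    (he : ∀ g, Measurable (e g)) (he1 : ∀ g x, e g x ≤ 1)
    (hpropT : P[(fun ω => indG G GLabel.T ω) | sigmaX X] =ᵐ[P] (fun ω => e GLabel.T (X ω)))
    (hε : 0 < ε) (hpos : ∀ g x, ε ≤ e g x) (p : ℝ) {Δ D : Ω → ℝ}
    (hΔ : Integrable Δ P) (hD : Integrable D P) {φT φN μ : (Fin q → ℝ) → ℝ}
    (hφT : IsCondVersion P X G e GLabel.T (fun ω => Δ ω - D ω) φT)
    (hφN : IsCondVersion P X G e GLabel.N Δ φN)
    (hμ : IsCondVersion P X G e GLabel.C Δ μ)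
    (hbal : ∀ᵐ ω ∂P, φT (X ω) + φN (X ω) = 2 * μ (X ω)) :
    (∫ ω, (indG G GLabel.T ω / p) * (Δ ω - μ (X ω)) ∂P)
        + (∫ ω, (e GLabel.T (X ω) / p) *
            (indG G GLabel.N ω / e GLabel.N (X ω) - indG G GLabel.C ω / e GLabel.C (X ω)) *
            Δ ω ∂P)
      = (∫ ω, D ω * indG G GLabel.T ω ∂P) / p := by
  have hμX : Integrable (fun ω => μ (X ω)) P := hμ.integrable_comp hX (he _) hε (hpos _)
  have hweighted : ∀ {φ : (Fin q → ℝ) → ℝ}, Integrable (fun ω => φ (X ω)) P →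
      Integrable (fun ω => φ (X ω) * e GLabel.T (X ω)) P := fun hφ =>
    hφ.mul_bdd ((he _).comp hX).aestronglyMeasurable (ae_of_all _ fun ω => by
      rw [Real.norm_eq_abs, abs_of_pos (hε.trans_le (hpos _ _))]; exact he1 _ _)
  have hφTe := hweighted (hφT.integrable_comp hX (he _) hε (hpos _))
  have hφNe := hweighted (hφN.integrable_comp hX (he _) hε (hpos _))
  have htreated : ∫ ω, Δ ω * indG G GLabel.T ω ∂P
      = (∫ ω, D ω * indG G GLabel.T ω ∂P) + ∫ ω, φT (X ω) * e GLabel.T (X ω) ∂P := by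
    rw [← hφT.integral_mul_indG hX, ← integral_add (hD.mul_indG hG _)
      (Integrable.mul_indG (Z := fun ω => Δ ω - D ω) hG (hΔ.sub hD) _)]
    congr 1; ext ω; ring
  have hμT : ∫ ω, μ (X ω) * indG G GLabel.T ω ∂P = ∫ ω, μ (X ω) * e GLabel.T (X ω) ∂P :=
    integral_comp_mul_of_condExp_ae_eq hX hμ.1 (integrable_indG hG _)
      (hμX.mul_indG hG _) hpropT
  have hneighbor := hφN.integral_propensity_ratio_mul hX hG he hε hpos he1 GLabel.T hΔ
  have hcontrol := hμ.integral_propensity_ratio_mul hX hG he hε hpos he1 GLabel.T hΔ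
  have hbalance : (∫ ω, φT (X ω) * e GLabel.T (X ω) ∂P) + ∫ ω, φN (X ω) * e GLabel.T (X ω) ∂P
      = 2 * ∫ ω, μ (X ω) * e GLabel.T (X ω) ∂P := by
    rw [← integral_add hφTe hφNe, ← integral_const_mul]
    refine integral_congr_ae ?_
    filter_upwards [hbal] with ω hω
    rw [← add_mul, hω, mul_assoc]
  have hfirst : ∫ ω, (indG G GLabel.T ω / p) * (Δ ω - μ (X ω)) ∂P
      = p⁻¹ * ((∫ ω, Δ ω * indG G GLabel.T ω ∂P) - ∫ ω, μ (X ω) * indG G GLabel.T ω ∂P) := by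
    rw [← integral_sub (hΔ.mul_indG hG _) (hμX.mul_indG hG _), ← integral_const_mul]
    congr 1; ext ω; ring
  have hsecond : ∫ ω, (e GLabel.T (X ω) / p) *
        (indG G GLabel.N ω / e GLabel.N (X ω) - indG G GLabel.C ω / e GLabel.C (X ω)) * Δ ω ∂P
      = p⁻¹ * ((∫ ω, e GLabel.T (X ω) / e GLabel.N (X ω) * (Δ ω * indG G GLabel.N ω) ∂P)
          - ∫ ω, e GLabel.T (X ω) / e GLabel.C (X ω) * (Δ ω * indG G GLabel.C ω) ∂P) := by
    rw [← integral_sub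
      (integrable_propensity_ratio_mul hX he hε hpos he1 _ _ (hΔ.mul_indG hG _))
      (integrable_propensity_ratio_mul hX he hε hpos he1 _ _ (hΔ.mul_indG hG _)),
      ← integral_const_mul]
    congr 1; ext ω; ring
  rw [hfirst, hsecond, htreated, hμT, hneighbor, hcontrol, div_eq_inv_mul]
  linear_combination p⁻¹ * hbalance

theorem did_estimand_eq_of_parallel_trends_of_offsetting (hX : Measurable X)
    (hG : Measurable G) (he : ∀ g, Measurable (e g)) (he1 : ∀ g x, e g x ≤ 1)
    (hpropT : P[(fun ω => indG G GLabel.T ω) | sigmaX X] =ᵐ[P] (fun ω => e GLabel.T (X ω)))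
    (hε : 0 < ε) (hpos : ∀ g x, ε ≤ e g x) (p : ℝ) {Y₁ Y₀ C10 C11 C01 C00 C00pre : Ω → ℝ}
    (hY₁ : Integrable Y₁ P) (hY₀ : Integrable Y₀ P) (hC10 : Integrable C10 P)
    (hC11 : Integrable C11 P) (hC01 : Integrable C01 P) (hC00 : Integrable C00 P)
    (hC00pre : Integrable C00pre P)
    (hconsT : ∀ᵐ ω ∂P, G ω = GLabel.T → Y₁ ω = C10 ω)
    (hconsN : ∀ᵐ ω ∂P, G ω = GLabel.N → Y₁ ω = C01 ω)
    (hconsC : ∀ᵐ ω ∂P, G ω = GLabel.C → Y₁ ω = C00 ω)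
    (hcons0 : Y₀ =ᵐ[P] C00pre) {gT gN gC fT fN μC : (Fin q → ℝ) → ℝ}
    (hgT : IsCondVersion P X G e GLabel.T (fun ω => C00 ω - C00pre ω) gT)
    (hgN : IsCondVersion P X G e GLabel.N (fun ω => C00 ω - C00pre ω) gN)
    (hgC : IsCondVersion P X G e GLabel.C (fun ω => C00 ω - C00pre ω) gC)
    (hS7 : ∀ᵐ ω ∂P, gT (X ω) = gC (X ω) ∧ gN (X ω) = gC (X ω))
    (hfT : IsCondVersion P X G e GLabel.T (fun ω => C10 ω - C11 ω) fT)
    (hfN : IsCondVersion P X G e GLabel.N (fun ω => C01 ω - C00 ω) fN)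
    (hOff : ∀ᵐ ω ∂P, fT (X ω) + fN (X ω) = 0)
    (hμC : IsCondVersion P X G e GLabel.C (fun ω => Y₁ ω - Y₀ ω) μC) :
    (∫ ω, (indG G GLabel.T ω / p) * ((Y₁ ω - Y₀ ω) - μC (X ω)) ∂P)
        + (∫ ω, (e GLabel.T (X ω) / p) *
            (indG G GLabel.N ω / e GLabel.N (X ω) - indG G GLabel.C ω / e GLabel.C (X ω)) *
            (Y₁ ω - Y₀ ω) ∂P)
      = (∫ ω, (C11 ω - C00 ω) * indG G GLabel.T ω ∂P) / p := by
  have hΔ₀ : Integrable (fun ω => C00 ω - C00pre ω) P := hC00.sub hC00pre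
  have hφT : IsCondVersion P X G e GLabel.T
      (fun ω => (Y₁ ω - Y₀ ω) - (C11 ω - C00 ω)) (fun x => fT x + gT x) := by
    refine (hfT.add hgT hG (hC10.sub hC11) hΔ₀).congr ?_
    filter_upwards [hconsT, hcons0] with ω hY₁ω hY₀ω hω
    rw [hY₁ω hω, hY₀ω]; ring
  have hφN : IsCondVersion P X G e GLabel.N (fun ω => Y₁ ω - Y₀ ω) (fun x => fN x + gN x) := by
    refine (hfN.add hgN hG (hC01.sub hC00) hΔ₀).congr ?_
    filter_upwards [hconsN, hcons0] with ω hY₁ω hY₀ω hω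
    rw [hY₁ω hω, hY₀ω]; ring
  have hgC' : IsCondVersion P X G e GLabel.C (fun ω => Y₁ ω - Y₀ ω) gC := by
    refine hgC.congr ?_
    filter_upwards [hconsC, hcons0] with ω hY₁ω hY₀ω hω
    rw [hY₁ω hω, hY₀ω]
  have hμg := hμC.ae_eq_comp (fun x => (hε.trans_le (hpos _ x)).ne') hgC'
  refine did_estimand_eq_of_balance hX hG he he1 hpropT hε hpos p (hY₁.sub hY₀)
    (hC11.sub hC00) hφT hφN hμC ?_
  filter_upwards [hOff, hS7, hμg] with ω hoff ⟨hgTC, hgNC⟩ hμgω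
  linear_combination hoff + hgTC + hgNC - 2 * hμgω

end Identification

theorem stmt_18_general
    {Ω : Type} [MeasurableSpace Ω] (P : Measure Ω) [IsProbabilityMeasure P]
    {q : ℕ} (X : Ω → (Fin q → ℝ)) (hX : Measurable X)
    (G : Ω → GLabel) (hG : Measurable G)
    (e : GLabel → (Fin q → ℝ) → ℝ) (he : ∀ g, Measurable (e g))
    (he1 : ∀ g x, e g x ≤ 1)
    (hprop : ∀ g : GLabel,
      P[(fun ω => indG G g ω) | sigmaX X] =ᵐ[P] (fun ω => e g (X ω)))
    (ε : ℝ) (hε : 0 < ε) (hpos : ∀ g x, ε ≤ e g x)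
    (T : ℕ)
    (Y : ℤ → Ω → ℝ)
    (hYint : ∀ t ∈ Finset.Icc (1 - (T : ℤ)) (T : ℤ), Integrable (Y t) P)
    (C10 C11 C01 C00 : ℤ → Ω → ℝ)
    (hIC10 : ∀ t ∈ Finset.Icc (1 : ℤ) (T : ℤ), Integrable (C10 t) P)
    (hIC11 : ∀ t ∈ Finset.Icc (1 : ℤ) (T : ℤ), Integrable (C11 t) P)
    (hIC01 : ∀ t ∈ Finset.Icc (1 : ℤ) (T : ℤ), Integrable (C01 t) P)
    (hIC00 : ∀ t ∈ Finset.Icc (1 - (T : ℤ)) (T : ℤ), Integrable (C00 t) P)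
    (hconsT : ∀ t ∈ Finset.Icc (1 : ℤ) (T : ℤ),
      ∀ᵐ ω ∂P, G ω = GLabel.T → Y t ω = C10 t ω)
    (hconsN : ∀ t ∈ Finset.Icc (1 : ℤ) (T : ℤ),
      ∀ᵐ ω ∂P, G ω = GLabel.N → Y t ω = C01 t ω)
    (hconsC : ∀ t ∈ Finset.Icc (1 : ℤ) (T : ℤ),
      ∀ᵐ ω ∂P, G ω = GLabel.C → Y t ω = C00 t ω)
    (hcons0 : ∀ t ∈ Finset.Icc (1 - (T : ℤ)) (0 : ℤ), Y t =ᵐ[P] C00 t)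
    (gT gN gC : ℤ → (Fin q → ℝ) → ℝ)
    (hgT : ∀ t ∈ Finset.Icc (1 : ℤ) (T : ℤ),
      IsCondVersion P X G e GLabel.T (fun ω => C00 t ω - C00 (t - (T : ℤ)) ω) (gT t))
    (hgN : ∀ t ∈ Finset.Icc (1 : ℤ) (T : ℤ),
      IsCondVersion P X G e GLabel.N (fun ω => C00 t ω - C00 (t - (T : ℤ)) ω) (gN t))
    (hgC : ∀ t ∈ Finset.Icc (1 : ℤ) (T : ℤ),
      IsCondVersion P X G e GLabel.C (fun ω => C00 t ω - C00 (t - (T : ℤ)) ω) (gC t))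
    (hS7 : ∀ t ∈ Finset.Icc (1 : ℤ) (T : ℤ),
      ∀ᵐ ω ∂P, gT t (X ω) = gC t (X ω) ∧ gN t (X ω) = gC t (X ω))
    (fT fN : ℤ → (Fin q → ℝ) → ℝ)
    (hfT : ∀ t ∈ Finset.Icc (1 : ℤ) (T : ℤ),
      IsCondVersion P X G e GLabel.T (fun ω => C10 t ω - C11 t ω) (fT t))
    (hfN : ∀ t ∈ Finset.Icc (1 : ℤ) (T : ℤ),
      IsCondVersion P X G e GLabel.N (fun ω => C01 t ω - C00 t ω) (fN t))
    (hOff : ∀ t ∈ Finset.Icc (1 : ℤ) (T : ℤ),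
      ∀ᵐ ω ∂P, fT t (X ω) + fN t (X ω) = 0)
    (μC : ℤ → (Fin q → ℝ) → ℝ)
    (hμC : ∀ t ∈ Finset.Icc (1 : ℤ) (T : ℤ),
      IsCondVersion P X G e GLabel.C (fun ω => Y t ω - Y (t - (T : ℤ)) ω) (μC t))
    :
    (∀ t ∈ Finset.Icc (1 : ℤ) (T : ℤ),
        (∫ ω, (indG G GLabel.T ω / (P {ω | G ω = GLabel.T}).toReal) *
            ((Y t ω - Y (t - (T : ℤ)) ω) - μC t (X ω)) ∂P)
          + (∫ ω, (e GLabel.T (X ω) / (P {ω | G ω = GLabel.T}).toReal) *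
              (indG G GLabel.N ω / e GLabel.N (X ω) - indG G GLabel.C ω / e GLabel.C (X ω)) *
              (Y t ω - Y (t - (T : ℤ)) ω) ∂P)
          = (∫ ω, (C11 t ω - C00 t ω) * indG G GLabel.T ω ∂P) / (P {ω | G ω = GLabel.T}).toReal) ∧
      ((T : ℝ)⁻¹ * ∑ t ∈ Finset.Icc (1 : ℤ) (T : ℤ),
          ((∫ ω, (indG G GLabel.T ω / (P {ω | G ω = GLabel.T}).toReal) *
              ((Y t ω - Y (t - (T : ℤ)) ω) - μC t (X ω)) ∂P)
            + (∫ ω, (e GLabel.T (X ω) / (P {ω | G ω = GLabel.T}).toReal) *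
                (indG G GLabel.N ω / e GLabel.N (X ω) - indG G GLabel.C ω / e GLabel.C (X ω)) *
                (Y t ω - Y (t - (T : ℤ)) ω) ∂P))
        = (T : ℝ)⁻¹ * ∑ t ∈ Finset.Icc (1 : ℤ) (T : ℤ),
            (∫ ω, (C11 t ω - C00 t ω) * indG G GLabel.T ω ∂P) / (P {ω | G ω = GLabel.T}).toReal) := by
  have hpost : ∀ t ∈ Finset.Icc (1 : ℤ) (T : ℤ), t ∈ Finset.Icc (1 - (T : ℤ)) (T : ℤ) := by
    intro t ht; simp only [Finset.mem_Icc] at ht ⊢; omega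
  have hpre : ∀ t ∈ Finset.Icc (1 : ℤ) (T : ℤ), t - (T : ℤ) ∈ Finset.Icc (1 - (T : ℤ)) (T : ℤ) := by
    intro t ht; simp only [Finset.mem_Icc] at ht ⊢; omega
  have hpre₀ : ∀ t ∈ Finset.Icc (1 : ℤ) (T : ℤ), t - (T : ℤ) ∈ Finset.Icc (1 - (T : ℤ)) 0 := by
    intro t ht; simp only [Finset.mem_Icc] at ht ⊢; omega
  have hperiod := fun t (ht : t ∈ Finset.Icc (1 : ℤ) (T : ℤ)) =>
    did_estimand_eq_of_parallel_trends_of_offsetting hX hG he he1 (hprop GLabel.T) hε hpos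
      (P {ω | G ω = GLabel.T}).toReal (hYint t (hpost t ht)) (hYint _ (hpre t ht)) (hIC10 t ht)
      (hIC11 t ht) (hIC01 t ht) (hIC00 t (hpost t ht)) (hIC00 _ (hpre t ht)) (hconsT t ht)
      (hconsN t ht) (hconsC t ht) (hcons0 _ (hpre₀ t ht)) (hgT t ht) (hgN t ht) (hgC t ht)
      (hS7 t ht) (hfT t ht) (hfN t ht) (hOff t ht) (hμC t ht)
  exact ⟨hperiod, congrArg (fun s => (T : ℝ)⁻¹ * s) (Finset.sum_congr rfl hperiod)⟩

theorem stmt_18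
    {Ω : Type} [MeasurableSpace Ω] (P : Measure Ω) [IsProbabilityMeasure P]
    {q : ℕ} (X : Ω → (Fin q → ℝ)) (hX : Measurable X)
    (G : Ω → GLabel) (hG : Measurable G)
    (e : GLabel → (Fin q → ℝ) → ℝ) (he : ∀ g, Measurable (e g))
    (he1 : ∀ g x, e g x ≤ 1)
    (hprop : ∀ g : GLabel,
      P[(fun ω => indG G g ω) | sigmaX X] =ᵐ[P] (fun ω => e g (X ω)))
    (ε : ℝ) (hε : 0 < ε) (hpos : ∀ g x, ε ≤ e g x)
    (hpT : 0 < (P {ω | G ω = GLabel.T}).toReal)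
    (T : ℕ) (hT : 1 ≤ T)
    (Y : ℤ → Ω → ℝ)
    (hYint : ∀ t ∈ Finset.Icc (1 - (T : ℤ)) (T : ℤ), Integrable (Y t) P)
    (C10 C11 C01 C00 : ℤ → Ω → ℝ)
    (hIC10 : ∀ t ∈ Finset.Icc (1 : ℤ) (T : ℤ), Integrable (C10 t) P)
    (hIC11 : ∀ t ∈ Finset.Icc (1 : ℤ) (T : ℤ), Integrable (C11 t) P)
    (hIC01 : ∀ t ∈ Finset.Icc (1 : ℤ) (T : ℤ), Integrable (C01 t) P)
    (hIC00 : ∀ t ∈ Finset.Icc (1 - (T : ℤ)) (T : ℤ), Integrable (C00 t) P)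
    (hconsT : ∀ t ∈ Finset.Icc (1 : ℤ) (T : ℤ),
      ∀ᵐ ω ∂P, G ω = GLabel.T → Y t ω = C10 t ω)
    (hconsN : ∀ t ∈ Finset.Icc (1 : ℤ) (T : ℤ),
      ∀ᵐ ω ∂P, G ω = GLabel.N → Y t ω = C01 t ω)
    (hconsC : ∀ t ∈ Finset.Icc (1 : ℤ) (T : ℤ),
      ∀ᵐ ω ∂P, G ω = GLabel.C → Y t ω = C00 t ω)
    (hcons0 : ∀ t ∈ Finset.Icc (1 - (T : ℤ)) (0 : ℤ), Y t =ᵐ[P] C00 t)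
    (gT gN gC : ℤ → (Fin q → ℝ) → ℝ)
    (hgT : ∀ t ∈ Finset.Icc (1 : ℤ) (T : ℤ),
      IsCondVersion P X G e GLabel.T (fun ω => C00 t ω - C00 (t - (T : ℤ)) ω) (gT t))
    (hgN : ∀ t ∈ Finset.Icc (1 : ℤ) (T : ℤ),
      IsCondVersion P X G e GLabel.N (fun ω => C00 t ω - C00 (t - (T : ℤ)) ω) (gN t))
    (hgC : ∀ t ∈ Finset.Icc (1 : ℤ) (T : ℤ),
      IsCondVersion P X G e GLabel.C (fun ω => C00 t ω - C00 (t - (T : ℤ)) ω) (gC t))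
    (hS7 : ∀ t ∈ Finset.Icc (1 : ℤ) (T : ℤ),
      ∀ᵐ ω ∂P, gT t (X ω) = gC t (X ω) ∧ gN t (X ω) = gC t (X ω))
    (fT fN : ℤ → (Fin q → ℝ) → ℝ)
    (hfT : ∀ t ∈ Finset.Icc (1 : ℤ) (T : ℤ),
      IsCondVersion P X G e GLabel.T (fun ω => C10 t ω - C11 t ω) (fT t))
    (hfN : ∀ t ∈ Finset.Icc (1 : ℤ) (T : ℤ),
      IsCondVersion P X G e GLabel.N (fun ω => C01 t ω - C00 t ω) (fN t))
    (hOff : ∀ t ∈ Finset.Icc (1 : ℤ) (T : ℤ),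
      ∀ᵐ ω ∂P, fT t (X ω) + fN t (X ω) = 0)
    (μC : ℤ → (Fin q → ℝ) → ℝ)
    (hμC : ∀ t ∈ Finset.Icc (1 : ℤ) (T : ℤ),
      IsCondVersion P X G e GLabel.C (fun ω => Y t ω - Y (t - (T : ℤ)) ω) (μC t))
    :
    (∀ t ∈ Finset.Icc (1 : ℤ) (T : ℤ),
        (∫ ω, (indG G GLabel.T ω / (P {ω | G ω = GLabel.T}).toReal) *
            ((Y t ω - Y (t - (T : ℤ)) ω) - μC t (X ω)) ∂P)
          + (∫ ω, (e GLabel.T (X ω) / (P {ω | G ω = GLabel.T}).toReal) *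
              (indG G GLabel.N ω / e GLabel.N (X ω) - indG G GLabel.C ω / e GLabel.C (X ω)) *
              (Y t ω - Y (t - (T : ℤ)) ω) ∂P)
          = (∫ ω, (C11 t ω - C00 t ω) * indG G GLabel.T ω ∂P) / (P {ω | G ω = GLabel.T}).toReal) ∧
      ((T : ℝ)⁻¹ * ∑ t ∈ Finset.Icc (1 : ℤ) (T : ℤ),
          ((∫ ω, (indG G GLabel.T ω / (P {ω | G ω = GLabel.T}).toReal) *
              ((Y t ω - Y (t - (T : ℤ)) ω) - μC t (X ω)) ∂P)
            + (∫ ω, (e GLabel.T (X ω) / (P {ω | G ω = GLabel.T}).toReal) *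
                (indG G GLabel.N ω / e GLabel.N (X ω) - indG G GLabel.C ω / e GLabel.C (X ω)) *
                (Y t ω - Y (t - (T : ℤ)) ω) ∂P))
        = (T : ℝ)⁻¹ * ∑ t ∈ Finset.Icc (1 : ℤ) (T : ℤ),
            (∫ ω, (C11 t ω - C00 t ω) * indG G GLabel.T ω ∂P) / (P {ω | G ω = GLabel.T}).toReal) :=
  stmt_18_general P X hX G hG e he he1 hprop ε hε hpos T Y hYint C10 C11 C01 C00 hIC10 hIC11 hIC01
    hIC00 hconsT hconsN hconsC hcons0 gT gN gC hgT hgN hgC hS7 fT fN hfT hfN hOff μC hμC
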